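/- Let c_ρ ≥ 1 and suppose ‖∇^s ρ‖ ≤ c_ρ^s · s! for all s ∈ ℕ. Under the inductive assumption ‖D^{α_i}u‖ ≤ C α_i!(CL)^{α_i}M^{α_i+1}/(α_i+1)², one has Σ_{s=2}^{k+1} c_ρ^s s! Σ_{|α|=k+1-s} (k!/(α!(s-1)!)) ∏_{i=1}^s ‖D^{α_i}u‖ ≤ C(k! M^{k+1}(CL)^k/(k+1)²) Σ_{s=2}^{k+1} c_ρ^s s L^{1-s}(k+1)²20^s/(k+2-s)². -/

import Mathlib

open scoped BigOperators

lemma sum_inv_sq_le (n : ℕ) : ∑ j ∈ Finset.range n, (1:ℝ)/((j:ℝ)+1)^2 ≤ 2 := by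
  have h : ∀ n : ℕ, ∑ j ∈ Finset.range n, (1:ℝ)/((j:ℝ)+1)^2 ≤ 2 - 2/((n:ℝ)+1) := by
    intro n
    induction n with
    | zero => norm_num
    | succ n ih =>
      rw [Finset.sum_range_succ]
      have hpos : (0:ℝ) < (n:ℝ)+1 := by positivity
      have hpos2 : (0:ℝ) < (n:ℝ)+2 := by positivity
      have key : (1:ℝ)/((n:ℝ)+1)^2 ≤ 2/((n:ℝ)+1) - 2/((n:ℝ)+2) := by
        rw [div_sub_div _ _ (by positivity) (by positivity)]
        rw [div_le_div_iff₀ (by positivity) (by positivity)]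
        ring_nf
        nlinarith [Nat.cast_nonneg (α := ℝ) n]
      push_cast
      have e : (n:ℝ)+1+1 = (n:ℝ)+2 := by ring
      rw [e]
      linarith
  have h2 : (0:ℝ) ≤ 2/((n:ℝ)+1) := by positivity
  linarith [h n]

lemma pair_term (A B : ℝ) (hA : 0 < A) (hB : 0 < B) :
    1/(A^2*B^2) ≤ 2/(A+B)^2 * (1/A^2 + 1/B^2) := by
  rw [div_add_div _ _ (by positivity) (by positivity), div_mul_div_comm,
    div_le_div_iff₀ (by positivity) (by positivity)]
  nlinarith [sq_nonneg (A-B), sq_nonneg (A*B), mul_pos hA hB, sq_nonneg A, sq_nonneg B,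
    mul_pos (mul_pos hA hA) (mul_pos hB hB)]

lemma pair (m : ℕ) : ∑ j ∈ Finset.range (m+1),
    (1/((j:ℝ)+1)^2) * (1/(((m-j:ℕ):ℝ)+1)^2) ≤ 20/((m:ℝ)+1)^2 := by
  have step : ∀ j ∈ Finset.range (m+1),
      (1/((j:ℝ)+1)^2) * (1/(((m-j:ℕ):ℝ)+1)^2)
        ≤ 2/((m:ℝ)+2)^2 * (1/((j:ℝ)+1)^2 + 1/(((m-j:ℕ):ℝ)+1)^2) := by
    intro j hj
    have hj' : j ≤ m := Nat.lt_succ_iff.mp (Finset.mem_range.mp hj)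
    have hcast : ((m-j:ℕ):ℝ) = (m:ℝ) - (j:ℝ) := by
      push_cast [Nat.cast_sub hj']; ring
    have h1 : (0:ℝ) < (j:ℝ)+1 := by positivity
    have h2 : (0:ℝ) < ((m-j:ℕ):ℝ)+1 := by positivity
    have hsum : ((j:ℝ)+1) + (((m-j:ℕ):ℝ)+1) = (m:ℝ)+2 := by rw [hcast]; ring
    have := pair_term ((j:ℝ)+1) (((m-j:ℕ):ℝ)+1) h1 h2
    rw [hsum] at this
    calc (1/((j:ℝ)+1)^2) * (1/(((m-j:ℕ):ℝ)+1)^2)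
        = 1/(((j:ℝ)+1)^2*(((m-j:ℕ):ℝ)+1)^2) := by rw [one_div_mul_one_div]
      _ ≤ _ := this
  have h := Finset.sum_le_sum step
  have hS1 : ∑ j ∈ Finset.range (m+1), (1:ℝ)/((j:ℝ)+1)^2 ≤ 2 := sum_inv_sq_le (m+1)
  have hS2 : ∑ j ∈ Finset.range (m+1), (1:ℝ)/(((m-j:ℕ):ℝ)+1)^2 ≤ 2 := by
    have := Finset.sum_range_reflect (fun j => (1:ℝ)/((j:ℝ)+1)^2) (m+1)
    simp only [Nat.add_sub_cancel] at this
    rw [this]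
    exact hS1
  calc ∑ j ∈ Finset.range (m+1), (1/((j:ℝ)+1)^2) * (1/(((m-j:ℕ):ℝ)+1)^2)
      ≤ ∑ j ∈ Finset.range (m+1),
          2/((m:ℝ)+2)^2 * (1/((j:ℝ)+1)^2 + 1/(((m-j:ℕ):ℝ)+1)^2) := h
    _ = 2/((m:ℝ)+2)^2 * ((∑ j ∈ Finset.range (m+1), (1:ℝ)/((j:ℝ)+1)^2)
          + ∑ j ∈ Finset.range (m+1), (1:ℝ)/(((m-j:ℕ):ℝ)+1)^2) := by
        rw [← Finset.mul_sum, Finset.sum_add_distrib]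
    _ ≤ 2/((m:ℝ)+2)^2 * (2+2) := by
        apply mul_le_mul_of_nonneg_left (by linarith) (by positivity)
    _ ≤ 20/((m:ℝ)+1)^2 := by
        rw [div_mul_eq_mul_div, div_le_div_iff₀ (by positivity) (by positivity)]
        nlinarith [Nat.cast_nonneg (α := ℝ) m]

lemma tuple_sum_succ (s m : ℕ) (f : (Fin (s+1) → ℕ) → ℝ) :
    ∑ α ∈ Finset.Nat.antidiagonalTuple (s+1) m, f α
      = ∑ j ∈ Finset.range (m+1), ∑ β ∈ Finset.Nat.antidiagonalTuple s (m - j),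
          f (Fin.cons j β) := by
  conv_rhs => rw [Finset.sum_sigma']
  refine Finset.sum_nbij' (fun α => ⟨α 0, Fin.tail α⟩) (fun p => Fin.cons p.1 p.2)
    ?_ ?_ ?_ ?_ ?_
  · intro α hα
    rw [Finset.Nat.mem_antidiagonalTuple, Fin.sum_univ_succ] at hα
    refine Finset.mem_sigma.mpr ⟨Finset.mem_range.mpr ?_, ?_⟩
    · exact Nat.lt_succ_of_le (hα ▸ Nat.le_add_right _ _)
    · rw [Finset.Nat.mem_antidiagonalTuple]
      exact Nat.eq_sub_of_add_eq' hα
  · intro p hp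
    rw [Finset.mem_sigma, Finset.mem_range, Finset.Nat.mem_antidiagonalTuple] at hp
    rw [Finset.Nat.mem_antidiagonalTuple, Fin.sum_univ_succ]
    simp only [Fin.cons_zero, Fin.cons_succ]
    rw [hp.2]
    exact Nat.add_sub_cancel' (Nat.lt_succ_iff.mp hp.1)
  · intro α _
    exact Fin.cons_self_tail α
  · intro p hp
    simp [Fin.tail_cons]
  · intro α _
    exact congrArg f (Fin.cons_self_tail α).symm

lemma chemin : ∀ s, 1 ≤ s → ∀ m : ℕ,
    (∑ α ∈ Finset.Nat.antidiagonalTuple s m, ∏ i, (1:ℝ)/((α i:ℝ)+1)^2)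
      ≤ 20^s/((m:ℝ)+1)^2 := by
  intro s
  induction s with
  | zero => omega
  | succ n ih =>
    intro _ m
    rcases Nat.eq_zero_or_pos n with hn | hn
    · subst hn
      rw [Finset.Nat.antidiagonalTuple_one, Finset.sum_singleton]
      rw [Fin.prod_univ_one]
      simp only [Matrix.cons_val_zero]
      rw [div_le_div_iff₀ (by positivity) (by positivity)]
      have h20 : (20:ℝ)^(0+1) = 20 := by norm_num
      rw [h20]
      nlinarith [sq_nonneg ((m:ℝ)+1)]
    · rw [tuple_sum_succ]
      have hstep : ∀ j ∈ Finset.range (m+1),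
          (∑ β ∈ Finset.Nat.antidiagonalTuple n (m - j),
            ∏ i, (1:ℝ)/(((Fin.cons j β : Fin (n+1) → ℕ) i:ℝ)+1)^2)
          ≤ 20^n * ((1/((j:ℝ)+1)^2) * (1/(((m-j:ℕ):ℝ)+1)^2)) := by
        intro j hj
        have : ∀ β ∈ Finset.Nat.antidiagonalTuple n (m - j),
            (∏ i, (1:ℝ)/(((Fin.cons j β : Fin (n+1) → ℕ) i:ℝ)+1)^2)
            = (1/((j:ℝ)+1)^2) * ∏ i, (1:ℝ)/((β i:ℝ)+1)^2 := by
          intro β _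
          rw [Fin.prod_univ_succ]
          simp [Fin.cons_zero, Fin.cons_succ]
        rw [Finset.sum_congr rfl this, ← Finset.mul_sum]
        have h1 := ih hn (m - j)
        calc (1/((j:ℝ)+1)^2) * ∑ β ∈ Finset.Nat.antidiagonalTuple n (m-j),
              ∏ i, (1:ℝ)/((β i:ℝ)+1)^2
            ≤ (1/((j:ℝ)+1)^2) * (20^n/(((m-j:ℕ):ℝ)+1)^2) := by
              apply mul_le_mul_of_nonneg_left h1 (by positivity)
          _ = 20^n * ((1/((j:ℝ)+1)^2) * (1/(((m-j:ℕ):ℝ)+1)^2)) := by ring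
      calc ∑ j ∈ Finset.range (m+1), ∑ β ∈ Finset.Nat.antidiagonalTuple n (m - j),
            ∏ i, (1:ℝ)/(((Fin.cons j β : Fin (n+1) → ℕ) i:ℝ)+1)^2
          ≤ ∑ j ∈ Finset.range (m+1),
              20^n * ((1/((j:ℝ)+1)^2) * (1/(((m-j:ℕ):ℝ)+1)^2)) :=
            Finset.sum_le_sum hstep
        _ = 20^n * ∑ j ∈ Finset.range (m+1),
              (1/((j:ℝ)+1)^2) * (1/(((m-j:ℕ):ℝ)+1)^2) := by rw [← Finset.mul_sum]
        _ ≤ 20^n * (20/((m:ℝ)+1)^2) := by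
            apply mul_le_mul_of_nonneg_left (pair m) (by positivity)
        _ = 20^(n+1)/((m:ℝ)+1)^2 := by ring

lemma cancel_P (Fk P Fs c1 c2 c3 q : ℝ) (hP : P ≠ 0) (hFs : Fs ≠ 0) :
    Fk / (P * Fs) * (c1 * P * c2 * c3 * q) = Fk / Fs * (c1 * c2 * c3) * q := by
  field_simp

lemma key_algebra (cs ss Fs Fk CC Ck Lm Lk Mk k1 m1 t : ℝ) (hFs : Fs ≠ 0)
    (hk1 : k1 ≠ 0) (hm1 : m1 ≠ 0) (hLk : Lk ≠ 0) :
    cs * (ss * Fs) * (Fk / Fs * (CC * Ck * Lm * Mk) * (t / m1^2))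
    = CC * (Fk * Mk * (Ck * Lk) / k1^2) * (cs * ss * (Lm / Lk) * k1^2 * t / m1^2) := by
  field_simp

set_option maxHeartbeats 1000000 in
/-- Abstract inequality behind the normal trace estimate (ineq:boundary): with
`c_ρ ≥ 1` (so that `‖∇^s ρ‖ ≤ c_ρ^s s!`), under the inductive bound
`a_j ≤ C·j!(CL)^j M^{j+1}/(j+1)²`, one has
`Σ_{s=2}^{k+1} c_ρ^s s! Σ_{|α|=k+1-s} (k!/(α!(s-1)!)) Π a_{α_i}
  ≤ C·(k! M^{k+1}(CL)^k/(k+1)²)·Σ_{s=2}^{k+1} c_ρ^s s L^{1-s}(k+1)²20^s/(k+2-s)²`. -/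
theorem normal_trace_estimate_abstract (k : ℕ) (hk : 1 ≤ k)
    (C L M c_ρ : ℝ) (hC : 1 ≤ C) (hL : 0 < L) (hM : 0 < M) (hρ : 1 ≤ c_ρ)
    (a : ℕ → ℝ) (ha_nonneg : ∀ j, 0 ≤ a j)
    (ha : ∀ j : ℕ, a j ≤ C * (Nat.factorial j : ℝ) * (C * L) ^ j * M ^ (j + 1)
        / ((j : ℝ) + 1) ^ 2) :
    (∑ s ∈ Finset.Icc 2 (k + 1), c_ρ ^ s * (Nat.factorial s : ℝ) *
      ∑ α ∈ Finset.Nat.antidiagonalTuple s (k + 1 - s),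
        ((Nat.factorial k : ℝ)
            / ((∏ i, ((Nat.factorial (α i) : ℕ) : ℝ)) * (Nat.factorial (s - 1) : ℝ)))
          * ∏ i, a (α i))
    ≤ C * ((Nat.factorial k : ℝ) * M ^ (k + 1) * (C * L) ^ k / ((k : ℝ) + 1) ^ 2)
        * ∑ s ∈ Finset.Icc 2 (k + 1),
            c_ρ ^ s * (s : ℝ) * L ^ (1 - (s : ℤ)) * ((k : ℝ) + 1) ^ 2 * 20 ^ s
              / ((k + 2 - s : ℕ) : ℝ) ^ 2 := by
  have hC0 : (0:ℝ) < C := lt_of_lt_of_le one_pos hC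
  rw [Finset.mul_sum]
  apply Finset.sum_le_sum
  intro s hs
  obtain ⟨hs2, hsk⟩ := Finset.mem_Icc.mp hs
  set m := k + 1 - s with hm_def
  have hms : m + s = k + 1 := Nat.sub_add_cancel hsk
  have hk2s : k + 2 - s = m + 1 := by omega
  have hs1 : 1 ≤ s := le_trans (by norm_num) hs2
  set X : ℝ := (Nat.factorial k : ℝ) / (Nat.factorial (s-1) : ℝ)
      * (C ^ s * (C*L) ^ m * M ^ (k+1)) with hX_def
  have hfs : ((Nat.factorial (s-1) : ℕ) : ℝ) ≠ 0 := by
    exact_mod_cast (Nat.factorial_pos _).ne'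
  have hX0 : 0 ≤ X := by rw [hX_def]; positivity
  have hinner : (∑ α ∈ Finset.Nat.antidiagonalTuple s m,
      ((Nat.factorial k : ℝ)
          / ((∏ i, ((Nat.factorial (α i) : ℕ) : ℝ)) * (Nat.factorial (s - 1) : ℝ)))
        * ∏ i, a (α i))
      ≤ X * (20 ^ s / ((m:ℝ)+1)^2) := by
    have hterm : ∀ α ∈ Finset.Nat.antidiagonalTuple s m,
        ((Nat.factorial k : ℝ)
            / ((∏ i, ((Nat.factorial (α i) : ℕ) : ℝ)) * (Nat.factorial (s - 1) : ℝ)))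
          * ∏ i, a (α i)
        ≤ X * ∏ i, (1:ℝ)/((α i : ℝ)+1)^2 := by
      intro α hα
      have hsum : ∑ i, α i = m := Finset.Nat.mem_antidiagonalTuple.mp hα
      have hP : (∏ i, ((Nat.factorial (α i) : ℕ) : ℝ)) ≠ 0 :=
        (Finset.prod_pos fun i _ => by exact_mod_cast Nat.factorial_pos _).ne'
      have h1 : (∏ i, a (α i))
          ≤ C ^ s * (∏ i, ((Nat.factorial (α i) : ℕ) : ℝ)) * (C*L) ^ m * M ^ (k+1)
              * ∏ i, (1:ℝ)/((α i : ℝ)+1)^2 := by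
        calc ∏ i, a (α i)
            ≤ ∏ i, (C * (Nat.factorial (α i) : ℝ) * (C * L) ^ (α i) * M ^ (α i + 1)
                / ((α i : ℝ) + 1) ^ 2) :=
              Finset.prod_le_prod (fun i _ => ha_nonneg _) (fun i _ => ha _)
          _ = (∏ i : Fin s, C) * (∏ i, ((Nat.factorial (α i) : ℕ) : ℝ))
                * (∏ i, (C*L) ^ (α i)) * (∏ i, M ^ (α i + 1))
                * ∏ i, (1:ℝ)/((α i : ℝ)+1)^2 := by
              rw [Finset.prod_congr rfl fun i _ => div_eq_mul_one_div
                  (C * (Nat.factorial (α i) : ℝ) * (C * L) ^ (α i) * M ^ (α i + 1))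
                  (((α i : ℝ) + 1) ^ 2)]
              rw [Finset.prod_mul_distrib, Finset.prod_mul_distrib,
                Finset.prod_mul_distrib, Finset.prod_mul_distrib]
          _ = C ^ s * (∏ i, ((Nat.factorial (α i) : ℕ) : ℝ)) * (C*L) ^ m * M ^ (k+1)
                * ∏ i, (1:ℝ)/((α i : ℝ)+1)^2 := by
              rw [Finset.prod_const, Finset.card_univ, Fintype.card_fin,
                Finset.prod_pow_eq_pow_sum, Finset.prod_pow_eq_pow_sum, hsum]
              congr 2
              rw [Finset.sum_add_distrib, hsum, Finset.sum_const, Finset.card_univ,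
                Fintype.card_fin, smul_eq_mul, mul_one, hms]
      have hcoef : (0:ℝ) ≤ (Nat.factorial k : ℝ)
          / ((∏ i, ((Nat.factorial (α i) : ℕ) : ℝ)) * (Nat.factorial (s - 1) : ℝ)) := by
        positivity
      calc ((Nat.factorial k : ℝ)
            / ((∏ i, ((Nat.factorial (α i) : ℕ) : ℝ)) * (Nat.factorial (s - 1) : ℝ)))
          * ∏ i, a (α i)
          ≤ ((Nat.factorial k : ℝ)
            / ((∏ i, ((Nat.factorial (α i) : ℕ) : ℝ)) * (Nat.factorial (s - 1) : ℝ)))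
            * (C ^ s * (∏ i, ((Nat.factorial (α i) : ℕ) : ℝ)) * (C*L) ^ m * M ^ (k+1)
              * ∏ i, (1:ℝ)/((α i : ℝ)+1)^2) :=
            mul_le_mul_of_nonneg_left h1 hcoef
        _ = X * ∏ i, (1:ℝ)/((α i : ℝ)+1)^2 := by
            rw [hX_def]
            exact cancel_P _ _ _ _ _ _ _ hP hfs
    calc (∑ α ∈ Finset.Nat.antidiagonalTuple s m,
        ((Nat.factorial k : ℝ)
            / ((∏ i, ((Nat.factorial (α i) : ℕ) : ℝ)) * (Nat.factorial (s - 1) : ℝ)))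
          * ∏ i, a (α i))
        ≤ ∑ α ∈ Finset.Nat.antidiagonalTuple s m, X * ∏ i, (1:ℝ)/((α i : ℝ)+1)^2 :=
          Finset.sum_le_sum hterm
      _ = X * ∑ α ∈ Finset.Nat.antidiagonalTuple s m, ∏ i, (1:ℝ)/((α i : ℝ)+1)^2 := by
          rw [← Finset.mul_sum]
      _ ≤ X * (20 ^ s / ((m:ℝ)+1)^2) :=
          mul_le_mul_of_nonneg_left (chemin s hs1 m) hX0
  have hfac : ((Nat.factorial s : ℕ) : ℝ) = (s : ℝ) * (Nat.factorial (s-1) : ℝ) := by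
    exact_mod_cast (Nat.mul_factorial_pred (lt_of_lt_of_le one_pos hs1).ne').symm
  have hL1s : L ^ (1 - (s:ℤ)) = L ^ m / L ^ k := by
    have h : (1 - (s:ℤ)) = (m:ℤ) - (k:ℤ) := by omega
    rw [h, zpow_sub₀ hL.ne', zpow_natCast, zpow_natCast]
  have hcρ : (0:ℝ) ≤ c_ρ ^ s * (Nat.factorial s : ℝ) := by positivity
  calc c_ρ ^ s * (Nat.factorial s : ℝ) *
      ∑ α ∈ Finset.Nat.antidiagonalTuple s m,
        ((Nat.factorial k : ℝ)
            / ((∏ i, ((Nat.factorial (α i) : ℕ) : ℝ)) * (Nat.factorial (s - 1) : ℝ)))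
          * ∏ i, a (α i)
      ≤ c_ρ ^ s * (Nat.factorial s : ℝ) * (X * (20 ^ s / ((m:ℝ)+1)^2)) :=
        mul_le_mul_of_nonneg_left hinner hcρ
    _ = C * ((Nat.factorial k : ℝ) * M ^ (k + 1) * (C * L) ^ k / ((k : ℝ) + 1) ^ 2)
        * (c_ρ ^ s * (s : ℝ) * L ^ (1 - (s : ℤ)) * ((k : ℝ) + 1) ^ 2 * 20 ^ s
              / ((k + 2 - s : ℕ) : ℝ) ^ 2) := by
        rw [hX_def, hfac, hL1s, hk2s]
        rw [show (((m+1 : ℕ)):ℝ) = (m:ℝ)+1 from by push_cast; ring]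
        rw [show C ^ s * (C*L) ^ m * M ^ (k+1) = C * C^k * L^m * M^(k+1) from by
          rw [mul_pow]
          rw [show C ^ s * (C ^ m * L ^ m) = C ^ s * C ^ m * L ^ m from by ring,
            ← pow_add, show s + m = k + 1 by omega, pow_succ]
          ring]
        rw [show ((C*L):ℝ)^k = C^k * L^k from mul_pow C L k]
        exact key_algebra _ _ _ _ _ _ _ _ _ _ _ _ hfs (by positivity) (by positivity)
          (by positivity)
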